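/- Let R be a commutative ring, A ∈ R^{m×n}, A° ∈ R^{n×m}, and let a_j denote the coefficient of Z^j in det(I_m + Z·(A·A°)). Assume D_{k+1}(A) = 0, D_{k+1}(A°) = 0, and a_k is a unit of R (so that A and A° are crossed of rank k). Then ψ := a_k⁻¹ · (a_{k−1}·A° − a_{k−2}·A°·A·A° + ⋯ + (−1)^{k−1}·(A°·A)^{k−1}·A°) ∈ R^{n×m} satisfies A·ψ·A = A, ψ·A·ψ = ψ, A°·A·ψ = A°, and ψ·A·A° = A°. Moreover A·ψ is the idempotent matrix giving the projection of R^m onto the range of A along the kernel of A°, and ψ·A is the idempotent matrix giving the projection of R^n onto the range of A° along the kernel of A. -/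

import Mathlib

open Matrix Polynomial

/-- The `k`-th determinantal ideal of a matrix. -/
noncomputable def detIdeal {R : Type*} [CommRing R] {m n : ℕ} (k : ℕ)
    (A : Matrix (Fin m) (Fin n) R) : Ideal R :=
  Ideal.span {x | ∃ (α : Fin k → Fin m) (β : Fin k → Fin n),
    StrictMono α ∧ StrictMono β ∧ x = (A.submatrix α β).det}

/-- `aCoeff A A' j` is the coefficient of `Z^j` in `det(I_m + Z·(A·A'))`. -/
noncomputable def aCoeff {R : Type*} [CommRing R] {m n : ℕ}
    (A : Matrix (Fin m) (Fin n) R) (A' : Matrix (Fin n) (Fin m) R) (j : ℕ) : R :=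
  (((1 : Matrix (Fin m) (Fin m) R[X]) + (X : R[X]) • (A * A').map C).det).coeff j

/-- `θ = a_{k−1}·A' − a_{k−2}·A'·A·A' + ⋯ + (−1)^{k−1}·(A'·A)^{k−1}·A'`. -/
noncomputable def adjK {R : Type*} [CommRing R] {m n : ℕ} (k : ℕ)
    (A : Matrix (Fin m) (Fin n) R) (A' : Matrix (Fin n) (Fin m) R) :
    Matrix (Fin n) (Fin m) R :=
  ∑ i ∈ Finset.range k, ((-1 : R) ^ i * aCoeff A A' (k - 1 - i)) • ((A' * A) ^ i * A')


/-!
Write `M = I + Z·A·A'` and `θ = adjK k A A'`. Comparing coefficients in `adj(M)·M = det(M)·I`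
shows that the `Z^j`-coefficient of `adj(M)` is `∑_{i ≤ j} (-1)^i a_{j-i} (A·A')^i`. By
linearity of the determinant in column `s`, `Z` times the `(s, t)` entry of `adj(M)·A` is
`det(I + Z·A·(A' + E_{ts})) - det(M)`, and the `Z^{k+1}`-coefficient of `det(I + Z·A·Q)` is a
sum of principal `(k+1)`-minors of `A·Q`, which lie in `D_{k+1}(A·Q) ⊆ D_{k+1}(A) = 0` by
Cauchy–Binet. Hence the `Z^k`-coefficient of `adj(M)·A` vanishes, which is the identity
`A·θ·A = a_k·A`; the same argument for `A'` gives `θ·A·A' = a_k·A'`. Everything else follows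
after scaling by `a_k⁻¹`, using that `θ` is a polynomial in `A'·A` times `A'`.
-/

section DeterminantalIdeal

variable {R : Type*} [CommRing R]

lemma det_submatrix_mem_detIdeal {m n K : ℕ} (A : Matrix (Fin m) (Fin n) R)
    (α : Fin K → Fin m) (β : Fin K → Fin n) : (A.submatrix α β).det ∈ detIdeal K A := by
  by_cases hα : α.Injective
  swap
  · obtain ⟨i, j, hij, hne⟩ := Function.not_injective_iff.mp hα
    rw [det_zero_of_row_eq hne (by ext; simp [hij])]
    exact zero_mem _
  by_cases hβ : β.Injective
  swap
  · obtain ⟨i, j, hij, hne⟩ := Function.not_injective_iff.mp hβ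
    rw [det_zero_of_column_eq hne (by simp [hij])]
    exact zero_mem _
  set σ := Tuple.sort α
  set τ := Tuple.sort β
  have hsorted : ((A.submatrix α β).submatrix σ τ).det ∈ detIdeal K A :=
    Ideal.subset_span ⟨α ∘ σ, β ∘ τ,
      (Tuple.monotone_sort α).strictMono_of_injective (hα.comp σ.injective),
      (Tuple.monotone_sort β).strictMono_of_injective (hβ.comp τ.injective), rfl⟩
  have hsign (π : Equiv.Perm (Fin K)) : IsUnit ((Equiv.Perm.sign π : ℤ) : R) :=
    (Equiv.Perm.sign π).isUnit.map (Int.castRingHom R)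
  rwa [show (A.submatrix α β).submatrix σ τ = ((A.submatrix α β).submatrix σ id).submatrix id τ
      from rfl, det_permute', det_permute, Ideal.unit_mul_mem_iff_mem _ (hsign τ),
    Ideal.unit_mul_mem_iff_mem _ (hsign σ)] at hsorted

lemma det_mul_eq_sum_prod_mul_det_submatrix {ι κ : Type*} [Fintype ι] [DecidableEq ι]
    [Fintype κ] (M : Matrix ι κ R) (N : Matrix κ ι R) :
    (M * N).det = ∑ β : ι → κ, (∏ i, N (β i) i) * (M.submatrix id β).det := by
  have hcols : (M * N)ᵀ = Matrix.of fun i => ∑ u, N u i • Mᵀ u := by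
    ext i j
    simp [Matrix.mul_apply, Finset.sum_apply, mul_comm]
  rw [← det_transpose, hcols]
  change detRowAlternating.toMultilinearMap (fun i => ∑ u, N u i • Mᵀ u) = _
  rw [MultilinearMap.map_sum]
  refine Finset.sum_congr rfl fun β _ => ?_
  rw [MultilinearMap.map_smul_univ, smul_eq_mul, ← det_transpose (M.submatrix id β)]
  rfl

lemma detIdeal_mul_le {m n p K : ℕ} (A : Matrix (Fin m) (Fin n) R)
    (Q : Matrix (Fin n) (Fin p) R) : detIdeal K (A * Q) ≤ detIdeal K A := by
  refine Ideal.span_le.mpr ?_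
  rintro _ ⟨α, β, -, -, rfl⟩
  rw [Matrix.submatrix_mul A Q α id β Function.bijective_id,
    det_mul_eq_sum_prod_mul_det_submatrix]
  refine Ideal.sum_mem _ fun γ _ => Ideal.mul_mem_left _ _ ?_
  rw [Matrix.submatrix_submatrix]
  exact det_submatrix_mem_detIdeal A _ _

lemma coeff_det_one_add_X_smul_mem_detIdeal {m : ℕ} (P : Matrix (Fin m) (Fin m) R) (j : ℕ) :
    (1 + (X : R[X]) • P.map C).det.coeff j ∈ detIdeal j P := by
  rw [coeff_det_one_add_X_smul_eq_sum_minors]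
  refine Ideal.sum_mem _ fun s hs => ?_
  have e : Fin j ≃ s :=
    (Fintype.equivFinOfCardEq (by simpa using (Finset.mem_powersetCard.mp hs).2)).symm
  rw [← det_submatrix_equiv_self e, Matrix.submatrix_submatrix]
  exact det_submatrix_mem_detIdeal P _ _

end DeterminantalIdeal

section Adjugate

variable {R : Type*} [CommRing R] {ι : Type*} [Fintype ι] [DecidableEq ι]

lemma map_coeff_mul_map_C {κ μ ν : Type*} [Fintype κ] (P : Matrix μ κ R[X]) (N : Matrix κ ν R)
    (j : ℕ) : (P * N.map C).map (·.coeff j) = P.map (·.coeff j) * N := by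
  ext s t
  simp [Matrix.mul_apply, coeff_mul_C]

lemma adjugate_one_add_X_smul_add (B : Matrix ι ι R) :
    adjugate (1 + (X : R[X]) • B.map C) +
        (X : R[X]) • (adjugate (1 + (X : R[X]) • B.map C) * B.map C) =
      (1 + (X : R[X]) • B.map C).det • 1 := by
  rw [← adjugate_mul, Matrix.mul_add, Matrix.mul_one, Matrix.mul_smul]

lemma map_coeff_adjugate_one_add_X_smul_zero (B : Matrix ι ι R) :
    (adjugate (1 + (X : R[X]) • B.map C)).map (·.coeff 0) =
      (1 + (X : R[X]) • B.map C).det.coeff 0 • 1 := by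
  ext s t
  have h := congrArg (·.coeff 0) (congrFun₂ (adjugate_one_add_X_smul_add B) s t)
  by_cases hst : s = t <;> simpa [Matrix.one_apply, hst] using h

lemma map_coeff_adjugate_one_add_X_smul_succ (B : Matrix ι ι R) (j : ℕ) :
    (adjugate (1 + (X : R[X]) • B.map C)).map (·.coeff (j + 1)) =
      (1 + (X : R[X]) • B.map C).det.coeff (j + 1) • 1 -
        (adjugate (1 + (X : R[X]) • B.map C)).map (·.coeff j) * B := by
  rw [eq_sub_iff_add_eq, ← map_coeff_mul_map_C]
  ext s t
  have h := congrArg (·.coeff (j + 1)) (congrFun₂ (adjugate_one_add_X_smul_add B) s t)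
  by_cases hst : s = t <;> simpa [coeff_X_mul, Matrix.one_apply, hst] using h

lemma map_coeff_adjugate_one_add_X_smul (B : Matrix ι ι R) (j : ℕ) :
    (adjugate (1 + (X : R[X]) • B.map C)).map (·.coeff j) =
      ∑ i ∈ Finset.range (j + 1),
        ((-1) ^ i * (1 + (X : R[X]) • B.map C).det.coeff (j - i)) • B ^ i := by
  induction j with
  | zero => simp [map_coeff_adjugate_one_add_X_smul_zero]
  | succ j ih =>
    rw [map_coeff_adjugate_one_add_X_smul_succ, ih, Finset.sum_mul,
      Finset.sum_range_succ' _ (j + 1), sub_eq_add_neg, add_comm, ← Finset.sum_neg_distrib]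
    congr 1
    · refine Finset.sum_congr rfl fun i _ => ?_
      rw [Nat.add_sub_add_right, Matrix.smul_mul, ← pow_succ, ← neg_smul]
      congr 1
      ring
    · simp

end Adjugate

section Vanishing

variable {R : Type*} [CommRing R] {m n k : ℕ}

lemma coeff_det_one_add_X_smul_mul_eq_zero {A : Matrix (Fin m) (Fin n) R}
    (hA : detIdeal (k + 1) A = ⊥) (Q : Matrix (Fin n) (Fin m) R) :
    (1 + (X : R[X]) • (A * Q).map C).det.coeff (k + 1) = 0 := by
  simpa [hA] using detIdeal_mul_le A Q (coeff_det_one_add_X_smul_mem_detIdeal (A * Q) (k + 1))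

lemma det_one_add_X_smul_mul_add_single (A : Matrix (Fin m) (Fin n) R)
    (Q : Matrix (Fin n) (Fin m) R) (s : Fin m) (t : Fin n) :
    ((1 : Matrix (Fin m) (Fin m) R[X]) + (X : R[X]) • (A * (Q + single t s 1)).map C).det =
      (1 + (X : R[X]) • (A * Q).map C).det +
        X * (adjugate (1 + (X : R[X]) • (A * Q).map C) * A.map C :
          Matrix (Fin m) (Fin n) R[X]) s t := by
  set M : Matrix (Fin m) (Fin m) R[X] := 1 + (X : R[X]) • (A * Q).map C
  have hcol : 1 + (X : R[X]) • (A * (Q + single t s 1)).map C =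
      M.updateCol s ((fun i => M i s) + (X : R[X]) • fun i => C (A i t)) := by
    rw [Matrix.mul_add, Matrix.map_add C (map_add C), smul_add, ← add_assoc]
    refine Matrix.ext fun i j => ?_
    obtain rfl | hj := eq_or_ne j s
    · simp [M]
    · simp [M, hj]
  rw [hcol, det_updateCol_add, updateCol_eq_self, det_updateCol_smul, ← cramer_apply,
    cramer_eq_adjugate_mulVec]
  rfl

lemma map_coeff_adjugate_mul_eq_zero {A : Matrix (Fin m) (Fin n) R}
    (hA : detIdeal (k + 1) A = ⊥) (A' : Matrix (Fin n) (Fin m) R) :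
    (adjugate (1 + (X : R[X]) • (A * A').map C) * A.map C).map (·.coeff k) = 0 := by
  ext s t
  have h := congrArg (·.coeff (k + 1)) (det_one_add_X_smul_mul_add_single A A' s t)
  simp only [coeff_add, coeff_X_mul, coeff_det_one_add_X_smul_mul_eq_zero hA, zero_add] at h
  exact h.symm

lemma sum_aCoeff_smul_pow_mul_eq_zero {A : Matrix (Fin m) (Fin n) R}
    (hA : detIdeal (k + 1) A = ⊥) (A' : Matrix (Fin n) (Fin m) R) :
    ∑ i ∈ Finset.range (k + 1), ((-1) ^ i * aCoeff A A' (k - i)) • ((A * A') ^ i * A) = 0 := by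
  have h := map_coeff_adjugate_mul_eq_zero hA A'
  rw [map_coeff_mul_map_C, map_coeff_adjugate_one_add_X_smul, Matrix.sum_mul] at h
  simp only [Matrix.smul_mul] at h
  exact h

end Vanishing

theorem Matrix.mul_pow_mul {l m α : Type*} [Fintype l] [Fintype m] [DecidableEq l]
    [DecidableEq m] [Semiring α] (A : Matrix l m α) (B : Matrix m l α) (i : ℕ) :
    (A * B) ^ i * A = A * (B * A) ^ i := by
  induction i with
  | zero => simp
  | succ i ih => rw [pow_succ', pow_succ', Matrix.mul_assoc, ih, ← Matrix.mul_assoc,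
      ← Matrix.mul_assoc, Matrix.mul_assoc A]

section AdjK

variable {R : Type*} [CommRing R] {m n k : ℕ}

lemma aCoeff_comm (A : Matrix (Fin m) (Fin n) R) (A' : Matrix (Fin n) (Fin m) R) (j : ℕ) :
    aCoeff A A' j = aCoeff A' A j := by
  unfold aCoeff
  rw [Matrix.map_mul, Matrix.map_mul, ← Matrix.mul_smul, ← Matrix.smul_mul, det_one_add_mul_comm]

lemma adjK_eq_sum_mul (A : Matrix (Fin m) (Fin n) R) (A' : Matrix (Fin n) (Fin m) R) :
    adjK k A A' =
      (∑ i ∈ Finset.range k, ((-1) ^ i * aCoeff A A' (k - 1 - i)) • (A' * A) ^ i) * A' := by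
  simp only [adjK, Matrix.sum_mul, Matrix.smul_mul]

lemma mul_adjK_mul {A : Matrix (Fin m) (Fin n) R} (hA : detIdeal (k + 1) A = ⊥)
    (A' : Matrix (Fin n) (Fin m) R) :
    A * adjK k A A' * A = aCoeff A A' k • A := by
  have h := sum_aCoeff_smul_pow_mul_eq_zero hA A'
  rw [Finset.sum_range_succ', add_eq_zero_iff_neg_eq, ← Finset.sum_neg_distrib] at h
  simp only [pow_zero, one_mul, Nat.sub_zero, Matrix.one_mul] at h
  rw [← h, adjK, Matrix.mul_sum, Matrix.sum_mul]
  refine Finset.sum_congr rfl fun i _ => ?_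
  have hpow : A * ((A' * A) ^ i * A') * A = (A * A') ^ (i + 1) * A := by
    rw [← Matrix.mul_assoc, ← Matrix.mul_pow_mul, Matrix.mul_assoc _ A, ← pow_succ]
  rw [Matrix.mul_smul, Matrix.smul_mul, hpow, ← neg_smul, Nat.sub_sub, add_comm 1 i]
  congr 1
  ring

lemma adjK_mul_eq_mul_adjK (A : Matrix (Fin m) (Fin n) R) (A' : Matrix (Fin n) (Fin m) R) :
    adjK k A A' * A = A' * adjK k A' A := by
  rw [adjK, adjK, Matrix.sum_mul, Matrix.mul_sum]
  refine Finset.sum_congr rfl fun i _ => ?_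
  rw [Matrix.smul_mul, Matrix.mul_smul, aCoeff_comm, Matrix.mul_pow_mul, Matrix.mul_assoc]

lemma adjK_mul_mul_comm (A : Matrix (Fin m) (Fin n) R) (A' : Matrix (Fin n) (Fin m) R) :
    adjK k A A' * A * A' = A' * A * adjK k A A' := by
  rw [adjK, Matrix.sum_mul, Matrix.sum_mul, Matrix.mul_sum]
  refine Finset.sum_congr rfl fun i _ => ?_
  rw [Matrix.smul_mul, Matrix.smul_mul, Matrix.mul_smul, Matrix.mul_assoc _ A', ← pow_succ,
    pow_succ', Matrix.mul_assoc (A' * A)]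

lemma adjK_mul_mul {A' : Matrix (Fin n) (Fin m) R} (hA' : detIdeal (k + 1) A' = ⊥)
    (A : Matrix (Fin m) (Fin n) R) :
    adjK k A A' * A * A' = aCoeff A A' k • A' := by
  rw [adjK_mul_eq_mul_adjK, mul_adjK_mul hA', aCoeff_comm]

lemma mul_mul_adjK {A' : Matrix (Fin n) (Fin m) R} (hA' : detIdeal (k + 1) A' = ⊥)
    (A : Matrix (Fin m) (Fin n) R) :
    A' * A * adjK k A A' = aCoeff A A' k • A' := by
  rw [← adjK_mul_mul_comm, adjK_mul_mul hA']

lemma adjK_mul_adjK {A' : Matrix (Fin n) (Fin m) R} (hA' : detIdeal (k + 1) A' = ⊥)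
    (A : Matrix (Fin m) (Fin n) R) :
    adjK k A A' * A * adjK k A A' = aCoeff A A' k • adjK k A A' := by
  obtain ⟨N, hN⟩ : ∃ N, adjK k A A' = N * A' := ⟨_, adjK_eq_sum_mul A A'⟩
  nth_rw 1 [hN]
  rw [Matrix.mul_assoc, Matrix.mul_assoc, ← Matrix.mul_assoc A', mul_mul_adjK hA',
    Matrix.mul_smul, hN]

end AdjK

section RangeKer

variable {R : Type*} [CommRing R] {ι κ μ : Type*} [Fintype κ] [Fintype μ]

lemma range_mulVecLin_eq_of_eq_mul {P : Matrix ι κ R} {Q : Matrix ι μ R} {S : Matrix μ κ R}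
    {T : Matrix κ μ R} (hS : P = Q * S) (hT : P * T = Q) :
    LinearMap.range P.mulVecLin = LinearMap.range Q.mulVecLin := by
  refine le_antisymm ?_ ?_
  · rw [hS, Matrix.mulVecLin_mul]
    exact LinearMap.range_comp_le_range _ _
  · rw [← hT, Matrix.mulVecLin_mul]
    exact LinearMap.range_comp_le_range _ _

lemma ker_mulVecLin_eq_of_eq_mul [Fintype ι] {P : Matrix ι κ R} {Q : Matrix μ κ R}
    {S : Matrix ι μ R} {T : Matrix μ ι R} (hS : P = S * Q) (hT : T * P = Q) :
    LinearMap.ker P.mulVecLin = LinearMap.ker Q.mulVecLin := by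
  refine le_antisymm ?_ ?_
  · rw [← hT, Matrix.mulVecLin_mul]
    exact LinearMap.ker_le_ker_comp _ _
  · rw [hS, Matrix.mulVecLin_mul]
    exact LinearMap.ker_le_ker_comp _ _

end RangeKer

theorem stmt16 {R : Type*} [CommRing R] {m n k : ℕ}
    (A : Matrix (Fin m) (Fin n) R) (A' : Matrix (Fin n) (Fin m) R)
    (hA : detIdeal (k + 1) A = ⊥) (hA' : detIdeal (k + 1) A' = ⊥)
    (ha : IsUnit (aCoeff A A' k)) :
    A * ((↑ha.unit⁻¹ : R) • adjK k A A') * A = A ∧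
    ((↑ha.unit⁻¹ : R) • adjK k A A') * A * ((↑ha.unit⁻¹ : R) • adjK k A A') =
      (↑ha.unit⁻¹ : R) • adjK k A A' ∧
    A' * A * ((↑ha.unit⁻¹ : R) • adjK k A A') = A' ∧
    ((↑ha.unit⁻¹ : R) • adjK k A A') * A * A' = A' ∧
    (A * ((↑ha.unit⁻¹ : R) • adjK k A A')) * (A * ((↑ha.unit⁻¹ : R) • adjK k A A')) =
      A * ((↑ha.unit⁻¹ : R) • adjK k A A') ∧
    LinearMap.range (A * ((↑ha.unit⁻¹ : R) • adjK k A A')).mulVecLin =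
      LinearMap.range A.mulVecLin ∧
    LinearMap.ker (A * ((↑ha.unit⁻¹ : R) • adjK k A A')).mulVecLin =
      LinearMap.ker A'.mulVecLin ∧
    (((↑ha.unit⁻¹ : R) • adjK k A A') * A) * (((↑ha.unit⁻¹ : R) • adjK k A A') * A) =
      ((↑ha.unit⁻¹ : R) • adjK k A A') * A ∧
    LinearMap.range (((↑ha.unit⁻¹ : R) • adjK k A A') * A).mulVecLin =
      LinearMap.range A'.mulVecLin ∧
    LinearMap.ker (((↑ha.unit⁻¹ : R) • adjK k A A') * A).mulVecLin =
      LinearMap.ker A.mulVecLin := by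
  set u : R := ↑ha.unit⁻¹
  set ψ := u • adjK k A A' with hψ
  have hu : u * aCoeff A A' k = 1 := ha.val_inv_mul
  have h₁ : A * ψ * A = A := by
    rw [Matrix.mul_smul, Matrix.smul_mul, mul_adjK_mul hA, smul_smul, hu, one_smul]
  have h₂ : ψ * A * ψ = ψ := by
    rw [Matrix.smul_mul, Matrix.smul_mul, Matrix.mul_smul, adjK_mul_adjK hA', smul_smul,
      smul_smul, mul_assoc, hu, mul_one]
  have h₃ : A' * A * ψ = A' := by
    rw [Matrix.mul_smul, mul_mul_adjK hA', smul_smul, hu, one_smul]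
  have h₄ : ψ * A * A' = A' := by
    rw [Matrix.smul_mul, Matrix.smul_mul, adjK_mul_mul hA', smul_smul, hu, one_smul]
  obtain ⟨N, hN⟩ : ∃ N, adjK k A A' = N * A' := ⟨_, adjK_eq_sum_mul A A'⟩
  refine ⟨h₁, h₂, h₃, h₄, by rw [← Matrix.mul_assoc, h₁], range_mulVecLin_eq_of_eq_mul rfl h₁,
    ker_mulVecLin_eq_of_eq_mul (S := u • (A * N)) ?_ (by rw [← Matrix.mul_assoc, h₃]),
    by rw [← Matrix.mul_assoc, h₂], range_mulVecLin_eq_of_eq_mul (S := u • adjK k A' A) ?_ h₄,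
    ker_mulVecLin_eq_of_eq_mul rfl (by rw [← Matrix.mul_assoc, h₁])⟩
  · rw [hψ, hN, Matrix.mul_smul, Matrix.smul_mul, Matrix.mul_assoc]
  · rw [Matrix.smul_mul, adjK_mul_eq_mul_adjK, Matrix.mul_smul]
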